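/- Let ((Δ_i)_{0≤i≤n}, (ψ_i)_{0≤i≤n}) be a deformation of order n of a Coder pair (C, ψ_C). Define Ob_C = Σ_{i+j=n+1, i,j>0} ((Δ_i ⊗ Id_C) ∘ Δ_j − (Id_C ⊗ Δ_i) ∘ Δ_j) ∈ Hom_k(C, C⊗C⊗C) and Ob_ψ = Σ_{i+j=n+1, i,j>0} (Δ_i ∘ ψ_j − (Id_C ⊗ ψ_i) ∘ Δ_j − (ψ_i ⊗ Id_C) ∘ Δ_j) ∈ Hom_k(C, C⊗C). Then the 3-cochain (Ob_C, Ob_ψ) is a 3-cocycle of the Coder-pair complex with coefficients in the coadjoint bicomodule: δ_c(Ob_C) = 0 and δ_c(Ob_ψ) − ω(Ob_C) = 0. -/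

import Mathlib

open TensorProduct LinearMap

variable {k C : Type} [Field k] [AddCommGroup C] [Module k C]

/-- `δ_c(g) = (Id_C ⊗ g) ∘ Δ − Δ ∘ g + (g ⊗ Id_C) ∘ Δ` for `g ∈ Hom(C, C)`
(coadjoint coefficients). -/
noncomputable def delta1 (Δ : C →ₗ[k] C ⊗[k] C) (g : C →ₗ[k] C) : C →ₗ[k] C ⊗[k] C :=
  LinearMap.lTensor C g ∘ₗ Δ - Δ ∘ₗ g + LinearMap.rTensor C g ∘ₗ Δ

/-- `δ_c(f) = (Id_C ⊗ f) ∘ Δ − (Δ ⊗ Id_C) ∘ f + (Id_C ⊗ Δ) ∘ f − (f ⊗ Id_C) ∘ Δ`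
for `f ∈ Hom(C, C ⊗ C)` (coadjoint coefficients). -/
noncomputable def delta2 (Δ : C →ₗ[k] C ⊗[k] C) (f : C →ₗ[k] C ⊗[k] C) :
    C →ₗ[k] C ⊗[k] (C ⊗[k] C) :=
  LinearMap.lTensor C f ∘ₗ Δ
    - (TensorProduct.assoc k C C C).toLinearMap ∘ₗ LinearMap.rTensor C Δ ∘ₗ f
    + LinearMap.lTensor C Δ ∘ₗ f
    - (TensorProduct.assoc k C C C).toLinearMap ∘ₗ LinearMap.rTensor C f ∘ₗ Δ

/-- `ω(g) = ψ_C ∘ g − g ∘ ψ_C` for `g ∈ Hom(C, C)`. -/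
noncomputable def omega1 (ψC : C →ₗ[k] C) (g : C →ₗ[k] C) : C →ₗ[k] C :=
  ψC ∘ₗ g - g ∘ₗ ψC

/-- `ω(f) = (ψ_C ⊗ Id_C) ∘ f + (Id_C ⊗ ψ_C) ∘ f − f ∘ ψ_C` for `f ∈ Hom(C, C ⊗ C)`. -/
noncomputable def omega2 (ψC : C →ₗ[k] C) (f : C →ₗ[k] C ⊗[k] C) : C →ₗ[k] C ⊗[k] C :=
  LinearMap.rTensor C ψC ∘ₗ f + LinearMap.lTensor C ψC ∘ₗ f - f ∘ₗ ψC

/-- A 1-parameter formal deformation `(Δ_t = Σ Δ_i t^i, ψ_t = Σ ψ_i t^i)` of a Coder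
pair `(C, ψ_C)`: `Δ_0 = Δ`, `ψ_0 = ψ_C`, and for every `k ≥ 0`,
`Σ_{i+j=k} ((Id_C ⊗ Δ_i) ∘ Δ_j − (Δ_i ⊗ Id_C) ∘ Δ_j) = 0` and
`Σ_{i+j=k} (Δ_i ∘ ψ_j − (ψ_i ⊗ Id_C) ∘ Δ_j − (Id_C ⊗ ψ_i) ∘ Δ_j) = 0`. -/
noncomputable def IsFormalDeformation (Δ : C →ₗ[k] C ⊗[k] C) (ψC : C →ₗ[k] C)
    (Δs : ℕ → (C →ₗ[k] C ⊗[k] C)) (ψs : ℕ → (C →ₗ[k] C)) : Prop :=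
  Δs 0 = Δ ∧ ψs 0 = ψC ∧
  (∀ n : ℕ, ∑ p ∈ Finset.HasAntidiagonal.antidiagonal n, LinearMap.lTensor C (Δs p.1) ∘ₗ Δs p.2
      = ∑ p ∈ Finset.HasAntidiagonal.antidiagonal n,
          (TensorProduct.assoc k C C C).toLinearMap ∘ₗ LinearMap.rTensor C (Δs p.1) ∘ₗ Δs p.2) ∧
  (∀ n : ℕ, ∑ p ∈ Finset.HasAntidiagonal.antidiagonal n, Δs p.1 ∘ₗ ψs p.2
      = ∑ p ∈ Finset.HasAntidiagonal.antidiagonal n,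
          (LinearMap.rTensor C (ψs p.1) ∘ₗ Δs p.2 + LinearMap.lTensor C (ψs p.1) ∘ₗ Δs p.2))

/-- The additive group of 4-cochains `Hom(C, C^{⊗4})`.  (Registered explicitly since
instance search struggles with the deeply nested tensor product.) -/
noncomputable instance instAddCommGroupHom4 :
    AddCommGroup (C →ₗ[k] C ⊗[k] (C ⊗[k] (C ⊗[k] C))) :=
  @LinearMap.addCommGroup k k C (C ⊗[k] (C ⊗[k] (C ⊗[k] C))) _ _ _
    (TensorProduct.addCommGroup) _ _ (RingHom.id k)

/-- `δ_c(F)` for a 3-cochain `F ∈ Hom(C, C ⊗ C ⊗ C)` (coadjoint coefficients):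
`δ_c(F) = (Id ⊗ F) ∘ Δ − (Δ ⊗ Id ⊗ Id) ∘ F + (Id ⊗ Δ ⊗ Id) ∘ F − (Id ⊗ Id ⊗ Δ) ∘ F
          + (F ⊗ Id) ∘ Δ`. -/
noncomputable def delta3 (Δ : C →ₗ[k] C ⊗[k] C) (F : C →ₗ[k] C ⊗[k] (C ⊗[k] C)) :
    C →ₗ[k] C ⊗[k] (C ⊗[k] (C ⊗[k] C)) :=
  LinearMap.lTensor C F ∘ₗ Δ
    - (TensorProduct.assoc k C C (C ⊗[k] C)).toLinearMap
        ∘ₗ LinearMap.rTensor (C ⊗[k] C) Δ ∘ₗ F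
    + LinearMap.lTensor C
        ((TensorProduct.assoc k C C C).toLinearMap ∘ₗ LinearMap.rTensor C Δ) ∘ₗ F
    - LinearMap.lTensor C (LinearMap.lTensor C Δ) ∘ₗ F
    + (LinearMap.lTensor C (TensorProduct.assoc k C C C).toLinearMap
        ∘ₗ (TensorProduct.assoc k C (C ⊗[k] C) C).toLinearMap)
        ∘ₗ LinearMap.rTensor C F ∘ₗ Δ

/-- `ω(F) = (ψ ⊗ Id ⊗ Id) ∘ F + (Id ⊗ ψ ⊗ Id) ∘ F + (Id ⊗ Id ⊗ ψ) ∘ F − F ∘ ψ` for a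
3-cochain `F ∈ Hom(C, C ⊗ C ⊗ C)`. -/
noncomputable def omega3 (ψC : C →ₗ[k] C) (F : C →ₗ[k] C ⊗[k] (C ⊗[k] C)) :
    C →ₗ[k] C ⊗[k] (C ⊗[k] C) :=
  LinearMap.rTensor (C ⊗[k] C) ψC ∘ₗ F
    + LinearMap.lTensor C (LinearMap.rTensor C ψC) ∘ₗ F
    + LinearMap.lTensor C (LinearMap.lTensor C ψC) ∘ₗ F
    - F ∘ₗ ψC

/-- A deformation of order `n` of a Coder pair `(C, ψ_C)`: `Δ_0 = Δ`, `ψ_0 = ψ_C`, and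
the deformation equations hold modulo `t^{n+1}`, i.e. for every `0 ≤ m ≤ n`. -/
noncomputable def IsDeformationOfOrder (n : ℕ) (Δ : C →ₗ[k] C ⊗[k] C) (ψC : C →ₗ[k] C)
    (Δs : ℕ → (C →ₗ[k] C ⊗[k] C)) (ψs : ℕ → (C →ₗ[k] C)) : Prop :=
  Δs 0 = Δ ∧ ψs 0 = ψC ∧
  (∀ m : ℕ, m ≤ n →
    ∑ p ∈ Finset.HasAntidiagonal.antidiagonal m, LinearMap.lTensor C (Δs p.1) ∘ₗ Δs p.2
      = ∑ p ∈ Finset.HasAntidiagonal.antidiagonal m,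
          (TensorProduct.assoc k C C C).toLinearMap ∘ₗ LinearMap.rTensor C (Δs p.1) ∘ₗ Δs p.2) ∧
  (∀ m : ℕ, m ≤ n →
    ∑ p ∈ Finset.HasAntidiagonal.antidiagonal m, Δs p.1 ∘ₗ ψs p.2
      = ∑ p ∈ Finset.HasAntidiagonal.antidiagonal m,
          (LinearMap.rTensor C (ψs p.1) ∘ₗ Δs p.2 + LinearMap.lTensor C (ψs p.1) ∘ₗ Δs p.2))

/-- The first obstruction component
`Ob_C = Σ_{i+j=n+1, i,j>0} ((Δ_i ⊗ Id_C) ∘ Δ_j − (Id_C ⊗ Δ_i) ∘ Δ_j)`. -/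
noncomputable def obC (n : ℕ) (Δs : ℕ → (C →ₗ[k] C ⊗[k] C)) :
    C →ₗ[k] C ⊗[k] (C ⊗[k] C) :=
  ∑ p ∈ (Finset.HasAntidiagonal.antidiagonal (n + 1)).filter (fun p => 0 < p.1 ∧ 0 < p.2),
    ((TensorProduct.assoc k C C C).toLinearMap ∘ₗ LinearMap.rTensor C (Δs p.1) ∘ₗ Δs p.2
      - LinearMap.lTensor C (Δs p.1) ∘ₗ Δs p.2)

/-- The second obstruction component
`Ob_ψ = Σ_{i+j=n+1, i,j>0} (Δ_i ∘ ψ_j − (Id_C ⊗ ψ_i) ∘ Δ_j − (ψ_i ⊗ Id_C) ∘ Δ_j)`. -/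
noncomputable def obPsi (n : ℕ) (Δs : ℕ → (C →ₗ[k] C ⊗[k] C)) (ψs : ℕ → (C →ₗ[k] C)) :
    C →ₗ[k] C ⊗[k] C :=
  ∑ p ∈ (Finset.HasAntidiagonal.antidiagonal (n + 1)).filter (fun p => 0 < p.1 ∧ 0 < p.2),
    (Δs p.1 ∘ₗ ψs p.2 - LinearMap.lTensor C (ψs p.1) ∘ₗ Δs p.2
      - LinearMap.rTensor C (ψs p.1) ∘ₗ Δs p.2)

/-!
Truncate the deformation after degree `n`, which changes neither `Ob_C` nor `Ob_ψ`, and write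
`Q(f, g) = (f ⊗ 1) g − (1 ⊗ f) g` and `B(f, ψ) = f ψ − (ψ ⊗ 1) f − (1 ⊗ ψ) f`. By the deformation
equations `Σ_{b+c=m} Q(Δ_b, Δ_c)` and `Σ_{b+c=m} B(Δ_b, ψ_c)` vanish for `m ≤ n`; for `m = n + 1`
they are `Ob_C` and `Ob_ψ`. Two identities hold for arbitrary maps in place of `Δ` and `ψ_C`:
`δ_e(Q(f, g))` is a signed sum of differences `T(e, f, g) − T(σ(e, f, g))` of threefold composites
`T` with permuted arguments, and `δ_f(B(g, ψ)) − ω_ψ(Q(f, g)) = Q(B(f, ψ), g) − Q(B(g, ψ), f)`.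
Summing over `a + b + c = n + 1` therefore gives `Σ δ_{Δ_a}(Q(Δ_b, Δ_c)) = 0` and
`Σ δ_{Δ_a}(B(Δ_b, ψ_c)) = Σ ω_{ψ_a}(Q(Δ_b, Δ_c))`. Every term with `a > 0` contains an inner sum
of degree `≤ n`, so only `a = 0` survives: `δ_c(Ob_C) = 0` and `δ_c(Ob_ψ) = ω(Ob_C)`.
-/

namespace TensorProduct

variable {R M N P Q : Type*} [CommSemiring R] [AddCommMonoid M] [Module R M]
  [AddCommMonoid N] [Module R N] [AddCommMonoid P] [Module R P] [AddCommMonoid Q] [Module R Q]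

theorem assoc_rTensor_rTensor (f : M →ₗ[R] P) (x : (M ⊗[R] N) ⊗[R] Q) :
    TensorProduct.assoc R P N Q (rTensor Q (rTensor N f) x)
      = rTensor (N ⊗[R] Q) f (TensorProduct.assoc R M N Q x) :=
  LinearMap.congr_fun (ext_threefold fun _ _ _ => rfl :
    (TensorProduct.assoc R P N Q).toLinearMap ∘ₗ rTensor Q (rTensor N f)
      = rTensor (N ⊗[R] Q) f ∘ₗ TensorProduct.assoc R M N Q) x

theorem assoc_rTensor_lTensor (f : N →ₗ[R] P) (x : (M ⊗[R] N) ⊗[R] Q) :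
    TensorProduct.assoc R M P Q (rTensor Q (lTensor M f) x)
      = lTensor M (rTensor Q f) (TensorProduct.assoc R M N Q x) :=
  LinearMap.congr_fun (ext_threefold fun _ _ _ => rfl :
    (TensorProduct.assoc R M P Q).toLinearMap ∘ₗ rTensor Q (lTensor M f)
      = lTensor M (rTensor Q f) ∘ₗ TensorProduct.assoc R M N Q) x

theorem assoc_lTensor (f : P →ₗ[R] Q) (x : (M ⊗[R] N) ⊗[R] P) :
    TensorProduct.assoc R M N Q (lTensor (M ⊗[R] N) f x)
      = lTensor M (lTensor N f) (TensorProduct.assoc R M N P x) :=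
  LinearMap.congr_fun (ext_threefold fun _ _ _ => rfl :
    (TensorProduct.assoc R M N Q).toLinearMap ∘ₗ lTensor (M ⊗[R] N) f
      = lTensor M (lTensor N f) ∘ₗ TensorProduct.assoc R M N P) x

theorem assoc_pentagon (x : ((M ⊗[R] N) ⊗[R] P) ⊗[R] Q) :
    lTensor M (TensorProduct.assoc R N P Q)
        (TensorProduct.assoc R M (N ⊗[R] P) Q (rTensor Q (TensorProduct.assoc R M N P) x))
      = TensorProduct.assoc R M N (P ⊗[R] Q) (TensorProduct.assoc R (M ⊗[R] N) P Q x) :=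
  LinearMap.congr_fun (ext_fourfold fun _ _ _ _ => rfl :
    lTensor M (TensorProduct.assoc R N P Q).toLinearMap
        ∘ₗ (TensorProduct.assoc R M (N ⊗[R] P) Q).toLinearMap
        ∘ₗ rTensor Q (TensorProduct.assoc R M N P).toLinearMap
      = (TensorProduct.assoc R M N (P ⊗[R] Q)).toLinearMap
        ∘ₗ (TensorProduct.assoc R (M ⊗[R] N) P Q).toLinearMap) x

theorem rTensor_lTensor_comm {M' N' : Type*} [AddCommMonoid M'] [Module R M'] [AddCommMonoid N']
    [Module R N'] (f : M →ₗ[R] M') (g : N →ₗ[R] N') (x : M ⊗[R] N) :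
    rTensor N' f (lTensor M g x) = lTensor M' g (rTensor N f x) := by
  rw [← LinearMap.comp_apply, rTensor_comp_lTensor, ← lTensor_comp_rTensor, LinearMap.comp_apply]

end TensorProduct

namespace CoderPair

open Finset

section Antidiagonal

variable {M G : Type*} [AddCommMonoid M] [AddCommGroup G]

def tripleAntidiagonalSum (m : ℕ) (f : ℕ → ℕ → ℕ → M) : M :=
  ∑ p ∈ antidiagonal m, ∑ q ∈ antidiagonal p.2, f p.1 q.1 q.2

theorem tripleAntidiagonalSum_add (m : ℕ) (f g : ℕ → ℕ → ℕ → M) :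
    tripleAntidiagonalSum m (fun a b c => f a b c + g a b c)
      = tripleAntidiagonalSum m f + tripleAntidiagonalSum m g := by
  simp only [tripleAntidiagonalSum, sum_add_distrib]

theorem tripleAntidiagonalSum_sub (m : ℕ) (f g : ℕ → ℕ → ℕ → G) :
    tripleAntidiagonalSum m (fun a b c => f a b c - g a b c)
      = tripleAntidiagonalSum m f - tripleAntidiagonalSum m g := by
  simp only [tripleAntidiagonalSum, sum_sub_distrib]

theorem tripleAntidiagonalSum_swap₂₃ (m : ℕ) (f : ℕ → ℕ → ℕ → M) :
    tripleAntidiagonalSum m (fun a b c => f a c b) = tripleAntidiagonalSum m f :=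
  sum_congr rfl fun p _ => Nat.sum_antidiagonal_swap (f := fun q => f p.1 q.1 q.2)

theorem tripleAntidiagonalSum_swap₁₂ (m : ℕ) (f : ℕ → ℕ → ℕ → M) :
    tripleAntidiagonalSum m (fun a b c => f b a c) = tripleAntidiagonalSum m f := by
  simp only [tripleAntidiagonalSum, sum_sigma']
  refine sum_nbij' (fun x => ⟨(x.2.1, x.1.1 + x.2.2), (x.1.1, x.2.2)⟩)
    (fun x => ⟨(x.2.1, x.1.1 + x.2.2), (x.1.1, x.2.2)⟩) ?_ ?_ ?_ ?_ fun _ _ => rfl <;>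
  · rintro ⟨⟨a, s⟩, ⟨b, c⟩⟩ h
    simp only [mem_sigma, HasAntidiagonal.mem_antidiagonal, Sigma.mk.injEq, heq_eq_eq,
      Prod.mk.injEq, and_true, true_and] at h ⊢
    omega

theorem tripleAntidiagonalSum_rotate (m : ℕ) (f : ℕ → ℕ → ℕ → M) :
    tripleAntidiagonalSum m (fun a b c => f b c a) = tripleAntidiagonalSum m f := by
  rw [tripleAntidiagonalSum_swap₁₂ m (fun a b c => f a c b), tripleAntidiagonalSum_swap₂₃]

theorem tripleAntidiagonalSum_sub_swap₁₂ (m : ℕ) (f : ℕ → ℕ → ℕ → G) :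
    tripleAntidiagonalSum m (fun a b c => f a b c - f b a c) = 0 := by
  rw [tripleAntidiagonalSum_sub, tripleAntidiagonalSum_swap₁₂ m f, sub_self]

theorem tripleAntidiagonalSum_sub_rotate (m : ℕ) (f : ℕ → ℕ → ℕ → G) :
    tripleAntidiagonalSum m (fun a b c => f a b c - f b c a) = 0 := by
  rw [tripleAntidiagonalSum_sub, tripleAntidiagonalSum_rotate m f, sub_self]

theorem tripleAntidiagonalSum_sub_rotate' (m : ℕ) (f : ℕ → ℕ → ℕ → G) :
    tripleAntidiagonalSum m (fun a b c => f a b c - f c a b) = 0 := by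
  rw [tripleAntidiagonalSum_sub, sub_eq_zero]
  exact tripleAntidiagonalSum_rotate m (fun a b c => f c a b)

theorem sum_antidiagonal_succ_eq_of_forall_le {N : Type*} [AddCommMonoid N] (φ : ℕ → N →+ M)
    (x : ℕ → N) {n : ℕ} (hx : ∀ m ≤ n, x m = 0) :
    ∑ p ∈ antidiagonal (n + 1), φ p.1 (x p.2) = φ 0 (x (n + 1)) := by
  rw [Nat.sum_antidiagonal_succ, sum_eq_zero fun p hp => ?_, add_zero]
  show φ (p.1 + 1) (x p.2) = 0
  rw [hx p.2 (HasAntidiagonal.antidiagonal.snd_le hp), map_zero]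

theorem sum_swap_of_swap_mem {s : Finset (ℕ × ℕ)} (hs : ∀ p ∈ s, p.swap ∈ s) (f : ℕ × ℕ → M) :
    ∑ p ∈ s, f p.swap = ∑ p ∈ s, f p :=
  sum_nbij' Prod.swap Prod.swap hs hs (fun _ _ => rfl) (fun _ _ => rfl) fun _ _ => rfl

variable {X Y : Type*} [Zero X] [Zero Y]

theorem sum_antidiagonal_indicator_Iic (F : X → Y → M) (x : ℕ → X) (y : ℕ → Y) {m n : ℕ}
    (hm : m ≤ n) :
    ∑ p ∈ antidiagonal m, F ((Set.Iic n).indicator x p.1) ((Set.Iic n).indicator y p.2)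
      = ∑ p ∈ antidiagonal m, F (x p.1) (y p.2) := by
  refine sum_congr rfl fun p hp => ?_
  rw [Set.indicator_of_mem (Set.mem_Iic.2 ((HasAntidiagonal.antidiagonal.fst_le hp).trans hm)),
    Set.indicator_of_mem (Set.mem_Iic.2 ((HasAntidiagonal.antidiagonal.snd_le hp).trans hm))]

theorem sum_antidiagonal_succ_indicator_Iic (F : X → Y → M) (hF₁ : ∀ b, F 0 b = 0)
    (hF₂ : ∀ a, F a 0 = 0) (x : ℕ → X) (y : ℕ → Y) (n : ℕ) :
    ∑ p ∈ antidiagonal (n + 1), F ((Set.Iic n).indicator x p.1) ((Set.Iic n).indicator y p.2)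
      = ∑ p ∈ antidiagonal (n + 1) with 0 < p.1 ∧ 0 < p.2, F (x p.1) (y p.2) := by
  rw [sum_filter]
  refine sum_congr rfl fun p hp => ?_
  rw [HasAntidiagonal.mem_antidiagonal] at hp
  split_ifs with hpos
  · rw [Set.indicator_of_mem (Set.mem_Iic.2 (by omega)),
      Set.indicator_of_mem (Set.mem_Iic.2 (by omega))]
  · rcases Nat.eq_zero_or_pos p.1 with h1 | h1
    · rw [Set.indicator_of_notMem (s := Set.Iic n) (a := p.2) (by rw [Set.mem_Iic]; omega), hF₂]
    · rw [Set.indicator_of_notMem (s := Set.Iic n) (a := p.1) (by rw [Set.mem_Iic]; omega), hF₁]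

end Antidiagonal

def rTensorAssoc (N : Type*) [AddCommMonoid N] [Module k N] (y : C →ₗ[k] C ⊗[k] C) :
    C ⊗[k] N →ₗ[k] C ⊗[k] (C ⊗[k] N) :=
  (TensorProduct.assoc k C C N).toLinearMap ∘ₗ rTensor N y

def coassociator (f g : C →ₗ[k] C ⊗[k] C) : C →ₗ[k] C ⊗[k] (C ⊗[k] C) :=
  rTensorAssoc C f ∘ₗ g - lTensor C f ∘ₗ g

def coderivationDefect (f : C →ₗ[k] C ⊗[k] C) (ψ : C →ₗ[k] C) : C →ₗ[k] C ⊗[k] C :=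
  f ∘ₗ ψ - rTensor C ψ ∘ₗ f - lTensor C ψ ∘ₗ f

theorem coassociator_zero_left (g : C →ₗ[k] C ⊗[k] C) : coassociator 0 g = 0 := by
  simp [coassociator, rTensorAssoc]

theorem coassociator_zero_right (f : C →ₗ[k] C ⊗[k] C) : coassociator f 0 = 0 := by
  simp [coassociator]

theorem coderivationDefect_zero_left (ψ : C →ₗ[k] C) : coderivationDefect 0 ψ = 0 := by
  simp [coderivationDefect]

theorem coderivationDefect_zero_right (f : C →ₗ[k] C ⊗[k] C) : coderivationDefect f 0 = 0 := by
  simp [coderivationDefect]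

theorem delta3_add (e : C →ₗ[k] C ⊗[k] C) (F G : C →ₗ[k] C ⊗[k] (C ⊗[k] C)) :
    delta3 e (F + G) = delta3 e F + delta3 e G := by
  simp only [delta3, lTensor_add, rTensor_add, LinearMap.add_comp, LinearMap.comp_add]
  abel

theorem delta2_add (e : C →ₗ[k] C ⊗[k] C) (F G : C →ₗ[k] C ⊗[k] C) :
    delta2 e (F + G) = delta2 e F + delta2 e G := by
  simp only [delta2, lTensor_add, rTensor_add, LinearMap.add_comp, LinearMap.comp_add]
  abel

theorem omega3_add (ψ : C →ₗ[k] C) (F G : C →ₗ[k] C ⊗[k] (C ⊗[k] C)) :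
    omega3 ψ (F + G) = omega3 ψ F + omega3 ψ G := by
  simp only [omega3, LinearMap.add_comp, LinearMap.comp_add]
  abel

theorem delta3_coassociator (e f g : C →ₗ[k] C ⊗[k] C) :
    delta3 e (coassociator f g)
      = (lTensor C (rTensorAssoc C f) ∘ₗ lTensor C g ∘ₗ e
          - lTensor C (rTensorAssoc C e) ∘ₗ lTensor C f ∘ₗ g)
        - (rTensorAssoc (C ⊗[k] C) e ∘ₗ rTensorAssoc C f ∘ₗ g
          - rTensorAssoc (C ⊗[k] C) f ∘ₗ rTensorAssoc C g ∘ₗ e)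
        + (lTensor C (rTensorAssoc C e) ∘ₗ rTensorAssoc C f ∘ₗ g
          - lTensor C (rTensorAssoc C f) ∘ₗ rTensorAssoc C g ∘ₗ e)
        - (lTensor C (lTensor C e) ∘ₗ rTensorAssoc C f ∘ₗ g
          - lTensor C (lTensor C f) ∘ₗ rTensorAssoc C e ∘ₗ g)
        - (lTensor C (lTensor C f) ∘ₗ lTensor C g ∘ₗ e
          - lTensor C (lTensor C e) ∘ₗ lTensor C f ∘ₗ g) := by
  ext x
  simp only [delta3, coassociator, rTensorAssoc, LinearMap.sub_apply, LinearMap.add_apply,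
    LinearMap.comp_apply, lTensor_sub, rTensor_sub, lTensor_comp, rTensor_comp, map_sub,
    LinearEquiv.coe_coe, TensorProduct.assoc_rTensor_rTensor, TensorProduct.assoc_rTensor_lTensor,
    TensorProduct.assoc_lTensor, TensorProduct.rTensor_lTensor_comm, TensorProduct.assoc_pentagon]
  abel

theorem delta2_coderivationDefect_sub_omega3 (f g : C →ₗ[k] C ⊗[k] C) (ψ : C →ₗ[k] C) :
    delta2 f (coderivationDefect g ψ) - omega3 ψ (coassociator f g)
      = coassociator (coderivationDefect f ψ) g - coassociator (coderivationDefect g ψ) f := by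
  ext x
  simp only [delta2, omega3, coassociator, coderivationDefect, rTensorAssoc, LinearMap.sub_apply,
    LinearMap.add_apply, LinearMap.comp_apply, lTensor_sub, rTensor_sub, lTensor_comp,
    rTensor_comp, map_sub, LinearEquiv.coe_coe, TensorProduct.assoc_rTensor_rTensor,
    TensorProduct.assoc_rTensor_lTensor, TensorProduct.assoc_lTensor,
    TensorProduct.rTensor_lTensor_comm]
  abel

theorem tripleAntidiagonalSum_delta3_coassociator (D : ℕ → C →ₗ[k] C ⊗[k] C) (m : ℕ) :
    tripleAntidiagonalSum m (fun a b c => delta3 (D a) (coassociator (D b) (D c))) = 0 := by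
  simp only [delta3_coassociator]
  rw [tripleAntidiagonalSum_sub, tripleAntidiagonalSum_sub, tripleAntidiagonalSum_add,
    tripleAntidiagonalSum_sub, tripleAntidiagonalSum_sub_rotate', tripleAntidiagonalSum_sub_rotate,
    tripleAntidiagonalSum_sub_rotate, tripleAntidiagonalSum_sub_swap₁₂,
    tripleAntidiagonalSum_sub_rotate']
  simp

theorem tripleAntidiagonalSum_delta2_coderivationDefect (D : ℕ → C →ₗ[k] C ⊗[k] C)
    (Ψ : ℕ → C →ₗ[k] C) (m : ℕ) :
    tripleAntidiagonalSum m (fun a b c => delta2 (D a) (coderivationDefect (D b) (Ψ c)))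
      = tripleAntidiagonalSum m (fun a b c => omega3 (Ψ a) (coassociator (D b) (D c))) := by
  rw [tripleAntidiagonalSum_rotate m (fun a b c => omega3 (Ψ c) (coassociator (D a) (D b))),
    ← sub_eq_zero, ← tripleAntidiagonalSum_sub]
  simp only [delta2_coderivationDefect_sub_omega3]
  exact tripleAntidiagonalSum_sub_swap₁₂ m
    (fun a b c => coassociator (coderivationDefect (D a) (Ψ c)) (D b))

theorem delta3_sum_coassociator_eq_zero (D : ℕ → C →ₗ[k] C ⊗[k] C) (n : ℕ)
    (hD : ∀ m ≤ n, ∑ p ∈ antidiagonal m, coassociator (D p.1) (D p.2) = 0) :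
    delta3 (D 0) (∑ p ∈ antidiagonal (n + 1), coassociator (D p.1) (D p.2)) = 0 := by
  let φ a := AddMonoidHom.mk' (delta3 (D a)) (delta3_add (D a))
  calc delta3 (D 0) (∑ p ∈ antidiagonal (n + 1), coassociator (D p.1) (D p.2))
      = ∑ p ∈ antidiagonal (n + 1), φ p.1 (∑ q ∈ antidiagonal p.2, coassociator (D q.1) (D q.2)) :=
        (sum_antidiagonal_succ_eq_of_forall_le φ _ hD).symm
    _ = tripleAntidiagonalSum (n + 1) (fun a b c => delta3 (D a) (coassociator (D b) (D c))) := by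
        simp only [φ, map_sum, AddMonoidHom.mk'_apply, tripleAntidiagonalSum]
    _ = 0 := tripleAntidiagonalSum_delta3_coassociator D (n + 1)

theorem delta2_sum_coderivationDefect_eq (D : ℕ → C →ₗ[k] C ⊗[k] C) (Ψ : ℕ → C →ₗ[k] C) (n : ℕ)
    (hD : ∀ m ≤ n, ∑ p ∈ antidiagonal m, coassociator (D p.1) (D p.2) = 0)
    (hΨ : ∀ m ≤ n, ∑ p ∈ antidiagonal m, coderivationDefect (D p.1) (Ψ p.2) = 0) :
    delta2 (D 0) (∑ p ∈ antidiagonal (n + 1), coderivationDefect (D p.1) (Ψ p.2))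
      = omega3 (Ψ 0) (∑ p ∈ antidiagonal (n + 1), coassociator (D p.1) (D p.2)) := by
  let φ a := AddMonoidHom.mk' (delta2 (D a)) (delta2_add (D a))
  let ω a := AddMonoidHom.mk' (omega3 (Ψ a)) (omega3_add (Ψ a))
  calc delta2 (D 0) (∑ p ∈ antidiagonal (n + 1), coderivationDefect (D p.1) (Ψ p.2))
      = ∑ p ∈ antidiagonal (n + 1),
          φ p.1 (∑ q ∈ antidiagonal p.2, coderivationDefect (D q.1) (Ψ q.2)) :=
        (sum_antidiagonal_succ_eq_of_forall_le φ _ hΨ).symm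
    _ = tripleAntidiagonalSum (n + 1)
          (fun a b c => delta2 (D a) (coderivationDefect (D b) (Ψ c))) := by
        simp only [φ, map_sum, AddMonoidHom.mk'_apply, tripleAntidiagonalSum]
    _ = tripleAntidiagonalSum (n + 1) (fun a b c => omega3 (Ψ a) (coassociator (D b) (D c))) :=
        tripleAntidiagonalSum_delta2_coderivationDefect D Ψ (n + 1)
    _ = ∑ p ∈ antidiagonal (n + 1),
          ω p.1 (∑ q ∈ antidiagonal p.2, coassociator (D q.1) (D q.2)) := by
        simp only [ω, map_sum, AddMonoidHom.mk'_apply, tripleAntidiagonalSum]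
    _ = omega3 (Ψ 0) (∑ p ∈ antidiagonal (n + 1), coassociator (D p.1) (D p.2)) :=
        sum_antidiagonal_succ_eq_of_forall_le ω
          (fun s => ∑ q ∈ antidiagonal s, coassociator (D q.1) (D q.2)) hD

theorem sum_coderivationDefect_of_swap_mem {s : Finset (ℕ × ℕ)} (hs : ∀ p ∈ s, p.swap ∈ s)
    (Δs : ℕ → C →ₗ[k] C ⊗[k] C) (ψs : ℕ → C →ₗ[k] C) :
    ∑ p ∈ s, coderivationDefect (Δs p.1) (ψs p.2)
      = ∑ p ∈ s, (Δs p.1 ∘ₗ ψs p.2 - lTensor C (ψs p.1) ∘ₗ Δs p.2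
          - rTensor C (ψs p.1) ∘ₗ Δs p.2) := by
  simp only [coderivationDefect, sum_sub_distrib]
  rw [← sum_swap_of_swap_mem hs fun p => lTensor C (ψs p.1) ∘ₗ Δs p.2,
    ← sum_swap_of_swap_mem hs fun p => rTensor C (ψs p.1) ∘ₗ Δs p.2]
  simp only [Prod.fst_swap, Prod.snd_swap]
  abel

theorem obC_eq_sum_indicator (n : ℕ) (Δs : ℕ → C →ₗ[k] C ⊗[k] C) :
    obC n Δs = ∑ p ∈ antidiagonal (n + 1),
      coassociator ((Set.Iic n).indicator Δs p.1) ((Set.Iic n).indicator Δs p.2) := by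
  rw [sum_antidiagonal_succ_indicator_Iic _ coassociator_zero_left coassociator_zero_right]
  rfl

theorem obPsi_eq_sum_indicator (n : ℕ) (Δs : ℕ → C →ₗ[k] C ⊗[k] C) (ψs : ℕ → C →ₗ[k] C) :
    obPsi n Δs ψs = ∑ p ∈ antidiagonal (n + 1),
      coderivationDefect ((Set.Iic n).indicator Δs p.1) ((Set.Iic n).indicator ψs p.2) := by
  rw [sum_antidiagonal_succ_indicator_Iic _ coderivationDefect_zero_left
    coderivationDefect_zero_right, sum_coderivationDefect_of_swap_mem, obPsi]
  intro p hp
  simp only [mem_filter, HasAntidiagonal.mem_antidiagonal, Prod.fst_swap, Prod.snd_swap] at hp ⊢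
  omega

end CoderPair

namespace IsDeformationOfOrder

open Finset CoderPair

variable {n : ℕ} {Δ : C →ₗ[k] C ⊗[k] C} {ψC : C →ₗ[k] C} {Δs : ℕ → C →ₗ[k] C ⊗[k] C}
  {ψs : ℕ → C →ₗ[k] C}

theorem sum_coassociator_eq_zero (h : IsDeformationOfOrder n Δ ψC Δs ψs) {m : ℕ} (hm : m ≤ n) :
    ∑ p ∈ antidiagonal m, coassociator (Δs p.1) (Δs p.2) = 0 := by
  obtain ⟨-, -, hΔs, -⟩ := h
  simp only [coassociator, rTensorAssoc, LinearMap.comp_assoc, sum_sub_distrib]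
  rw [hΔs m hm, sub_self]

theorem sum_coderivationDefect_eq_zero (h : IsDeformationOfOrder n Δ ψC Δs ψs) {m : ℕ}
    (hm : m ≤ n) : ∑ p ∈ antidiagonal m, coderivationDefect (Δs p.1) (ψs p.2) = 0 := by
  obtain ⟨-, -, -, hψs⟩ := h
  rw [sum_coderivationDefect_of_swap_mem fun _ => HasAntidiagonal.swap_mem_antidiagonal.2]
  simp only [sum_sub_distrib]
  rw [hψs m hm, sum_add_distrib]
  abel

end IsDeformationOfOrder

open CoderPair

theorem obstruction_is_three_cocycle_general
    (Δ : C →ₗ[k] C ⊗[k] C)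
    (ψC : C →ₗ[k] C)
    (n : ℕ) (Δs : ℕ → (C →ₗ[k] C ⊗[k] C)) (ψs : ℕ → (C →ₗ[k] C))
    (hdef : IsDeformationOfOrder n Δ ψC Δs ψs) :
    delta3 Δ (obC n Δs) = 0
      ∧ delta2 Δ (obPsi n Δs ψs) - omega3 ψC (obC n Δs) = 0 := by
  set D := (Set.Iic n).indicator Δs
  set Ψ := (Set.Iic n).indicator ψs
  have hD0 : D 0 = Δ := (Set.indicator_of_mem (Set.mem_Iic.2 n.zero_le) Δs).trans hdef.1
  have hΨ0 : Ψ 0 = ψC := (Set.indicator_of_mem (Set.mem_Iic.2 n.zero_le) ψs).trans hdef.2.1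
  have hD m (hm : m ≤ n) := (sum_antidiagonal_indicator_Iic coassociator Δs Δs hm).trans
    (hdef.sum_coassociator_eq_zero hm)
  have hΨ m (hm : m ≤ n) := (sum_antidiagonal_indicator_Iic coderivationDefect Δs ψs hm).trans
    (hdef.sum_coderivationDefect_eq_zero hm)
  rw [obC_eq_sum_indicator, obPsi_eq_sum_indicator, ← hD0, ← hΨ0, sub_eq_zero]
  exact ⟨delta3_sum_coassociator_eq_zero D n hD, delta2_sum_coderivationDefect_eq D Ψ n hD hΨ⟩

/-- For a deformation of order `n` of a Coder pair `(C, ψ_C)`, the obstruction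
`(Ob_C, Ob_ψ)` is a 3-cocycle of the Coder-pair complex with coefficients in the
coadjoint bicomodule: `δ_c(Ob_C) = 0` and `δ_c(Ob_ψ) − ω(Ob_C) = 0`. -/
theorem obstruction_is_three_cocycle [CharZero k]
    (Δ : C →ₗ[k] C ⊗[k] C)
    (hΔ : (TensorProduct.assoc k C C C).toLinearMap ∘ₗ LinearMap.rTensor C Δ ∘ₗ Δ
        = LinearMap.lTensor C Δ ∘ₗ Δ)
    (ψC : C →ₗ[k] C)
    (hψC : Δ ∘ₗ ψC = LinearMap.rTensor C ψC ∘ₗ Δ + LinearMap.lTensor C ψC ∘ₗ Δ)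
    (n : ℕ) (Δs : ℕ → (C →ₗ[k] C ⊗[k] C)) (ψs : ℕ → (C →ₗ[k] C))
    (hdef : IsDeformationOfOrder n Δ ψC Δs ψs) :
    delta3 Δ (obC n Δs) = 0
      ∧ delta2 Δ (obPsi n Δs ψs) - omega3 ψC (obC n Δs) = 0 :=
  obstruction_is_three_cocycle_general Δ ψC n Δs ψs hdef
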